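/- arXiv:2411.00214 — 2 statements merged into one kernel-verified Lean document; each statement's English description precedes it below -/
import Mathlib

section
/- Convexity bound: for probability measures π, μ₀ and λ ∈ [0,1], D_KL(π | (1-λ)μ₀ + λπ) ≤ (1-λ)·D_KL(π | μ₀). In particular, taking λ = 1 - e^{-t} recovers the exponential decay D_KL(π | μ_t) ≤ e^{-t}·D_KL(π | μ₀) along the Fisher-Rao flow μ_t = e^{-t}μ₀ + (1-e^{-t})π. -/
open MeasureTheory
open scoped Classical

/-- The Kullback–Leibler divergence `D_KL(π|μ) = ∫ log(dπ/dμ) dπ` if `π ≪ μ` (and the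
integral is defined), `+∞` otherwise; valued in `ℝ≥0∞`. -/

noncomputable def klDiv {X : Type*} [MeasurableSpace X] (π μ : Measure X) : ENNReal :=
  if π ≪ μ ∧ Integrable (fun x => Real.log ((π.rnDeriv μ x).toReal)) π then
    ENNReal.ofReal (∫ x, Real.log ((π.rnDeriv μ x).toReal) ∂π)
  else ⊤

/-! With `f = dπ/dμ₀`, the density of `π` with respect to `(1-λ)μ₀ + λπ` is
`f / ((1-λ) + λf)`. By concavity of `log`, `λ log f ≤ log ((1-λ) + λf)`, so the log-density is
pointwise at most `(1-λ) log f`; it is also bounded in absolute value by `|log f|`, which makes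
it integrable whenever `log f` is. -/

namespace Real

lemma one_sub_add_mul_pos {f l : ℝ} (hf : 0 < f) (hl0 : 0 ≤ l) (hl1 : l ≤ 1) :
    0 < 1 - l + l * f := by
  nlinarith [mul_nonneg hl0 hf.le, mul_pos hf hf]

lemma log_div_one_sub_add_mul_le {f l : ℝ} (hf : 0 < f) (hl0 : 0 ≤ l) (hl1 : l ≤ 1) :
    log (f / (1 - l + l * f)) ≤ (1 - l) * log f := by
  have hconcave : l * log f ≤ log (1 - l + l * f) := by
    simpa using strictConcaveOn_log_Ioi.concaveOn.2 (Set.mem_Ioi.2 one_pos) (Set.mem_Ioi.2 hf)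
      (sub_nonneg.2 hl1) hl0 (by ring)
  rw [log_div hf.ne' (one_sub_add_mul_pos hf hl0 hl1).ne']
  linarith

lemma abs_log_div_one_sub_add_mul_le {f l : ℝ} (hf : 0 < f) (hl0 : 0 ≤ l) (hl1 : l ≤ 1) :
    |log (f / (1 - l + l * f))| ≤ |log f| := by
  have hd := one_sub_add_mul_pos hf hl0 hl1
  refine abs_le.2 ⟨?_, ?_⟩
  -- the denominator `1 - l + l * f` lies between `1` and `f`
  · rcases le_total f 1 with hf1 | hf1
    · have hf_le : f ≤ f / (1 - l + l * f) := le_div_self hf.le hd (by nlinarith)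
      linarith [log_le_log hf hf_le, neg_abs_le (log f)]
    · have hone_le : 1 ≤ f / (1 - l + l * f) := (one_le_div hd).2 (by nlinarith)
      linarith [log_nonneg hone_le, abs_nonneg (log f)]
  · calc log (f / (1 - l + l * f))
        ≤ (1 - l) * log f := log_div_one_sub_add_mul_le hf hl0 hl1
      _ ≤ (1 - l) * |log f| := mul_le_mul_of_nonneg_left (le_abs_self _) (by linarith)
      _ ≤ |log f| := by nlinarith [abs_nonneg (log f)]

end Real

open scoped ENNReal

section
variable {X : Type*} [MeasurableSpace X] {μ π : Measure X}

lemma klDiv_ne_top_iff : klDiv π μ ≠ ⊤ ↔ π ≪ μ ∧ Integrable (llr π μ) π := by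
  unfold klDiv
  split_ifs with h <;> simp_all [llr_def]

lemma klDiv_of_ac_of_integrable (hac : π ≪ μ) (hint : Integrable (llr π μ) π) :
    klDiv π μ = ENNReal.ofReal (∫ x, llr π μ x ∂π) :=
  if_pos ⟨hac, hint⟩

lemma klDiv_self (π : Measure X) [SigmaFinite π] : klDiv π π = 0 := by
  rw [klDiv_of_ac_of_integrable .rfl ((integrable_zero _ _ π).congr (llr_self π).symm),
    integral_congr_ae (llr_self π)]
  simp

lemma rnDeriv_smul_add_smul_mul_eq [IsFiniteMeasure μ] [IsFiniteMeasure π] {a b : ℝ≥0∞}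
    (ha : a ≠ ⊤) (hb : b ≠ ⊤) (hπ : π ≪ a • μ + b • π) :
    ∀ᵐ x ∂μ, π.rnDeriv (a • μ + b • π) x * (a + b * π.rnDeriv μ x) = π.rnDeriv μ x := by
  have := μ.smul_finite ha
  have := π.smul_finite hb
  filter_upwards [Measure.rnDeriv_mul_rnDeriv hπ, Measure.rnDeriv_add (a • μ) (b • π) μ,
    μ.rnDeriv_smul_left_of_ne_top μ ha, π.rnDeriv_smul_left_of_ne_top μ hb,
    μ.rnDeriv_self] with x hchain hadd hμ hπ hself
  rwa [Pi.mul_apply, hadd, Pi.add_apply, hμ, hπ, Pi.smul_apply, Pi.smul_apply, hself,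
    smul_eq_mul, smul_eq_mul, mul_one] at hchain

lemma toReal_rnDeriv_smul_add_smul [IsFiniteMeasure μ] [IsFiniteMeasure π] (hac : π ≪ μ)
    {l : ℝ} (hl0 : 0 ≤ l) (hl1 : l < 1) :
    ∀ᵐ x ∂π, (π.rnDeriv (ENNReal.ofReal (1 - l) • μ + ENNReal.ofReal l • π) x).toReal =
      (π.rnDeriv μ x).toReal / (1 - l + l * (π.rnDeriv μ x).toReal) := by
  have hπ : π ≪ ENNReal.ofReal (1 - l) • μ + ENNReal.ofReal l • π :=
    (hac.smul_right (by simpa using hl1)).add_right _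
  filter_upwards [hac.ae_le (rnDeriv_smul_add_smul_mul_eq ENNReal.ofReal_ne_top
    ENNReal.ofReal_ne_top hπ), hac.ae_le (π.rnDeriv_lt_top μ), Measure.rnDeriv_pos hac]
    with x hmul hlt hpos
  have hf := ENNReal.toReal_pos hpos.ne' hlt.ne
  have hmul_real := congrArg ENNReal.toReal hmul
  rw [ENNReal.toReal_mul,
    ENNReal.toReal_add ENNReal.ofReal_ne_top (ENNReal.mul_ne_top ENNReal.ofReal_ne_top hlt.ne),
    ENNReal.toReal_mul, ENNReal.toReal_ofReal (by linarith), ENNReal.toReal_ofReal hl0]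
    at hmul_real
  rw [eq_div_iff (Real.one_sub_add_mul_pos hf hl0 hl1.le).ne', hmul_real]

lemma klDiv_smul_add_smul_le [IsFiniteMeasure μ] [IsFiniteMeasure π] {l : ℝ} (hl0 : 0 ≤ l)
    (hl1 : l ≤ 1) :
    klDiv π (ENNReal.ofReal (1 - l) • μ + ENNReal.ofReal l • π) ≤
      ENNReal.ofReal (1 - l) * klDiv π μ := by
  obtain rfl | hl1 := hl1.eq_or_lt
  · simp [klDiv_self]
  by_cases htop : klDiv π μ = ⊤
  · simp [htop, ENNReal.mul_top, hl1]
  obtain ⟨hac, hint⟩ := klDiv_ne_top_iff.1 htop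
  have hratio := toReal_rnDeriv_smul_add_smul hac hl0 hl1
  set ν := ENNReal.ofReal (1 - l) • μ + ENNReal.ofReal l • π
  have hπν : π ≪ ν := (hac.smul_right (by simpa using hl1)).add_right _
  have hbounds : ∀ᵐ x ∂π, llr π ν x ≤ (1 - l) * llr π μ x ∧ |llr π ν x| ≤ |llr π μ x| := by
    filter_upwards [hratio, Measure.rnDeriv_pos hac,
      hac.ae_le (π.rnDeriv_lt_top μ)] with x hx hpos hlt
    have hf := ENNReal.toReal_pos hpos.ne' hlt.ne
    simp only [llr_def, hx]
    exact ⟨Real.log_div_one_sub_add_mul_le hf hl0 hl1.le,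
      Real.abs_log_div_one_sub_add_mul_le hf hl0 hl1.le⟩
  have hint_ν : Integrable (llr π ν) π :=
    hint.mono (measurable_llr π ν).aestronglyMeasurable (hbounds.mono fun _ hx => hx.2)
  rw [klDiv_of_ac_of_integrable hπν hint_ν, klDiv_of_ac_of_integrable hac hint,
    ← ENNReal.ofReal_mul (by linarith), ← integral_const_mul]
  exact ENNReal.ofReal_le_ofReal
    (integral_mono_ae hint_ν (hint.const_mul _) (hbounds.mono fun _ hx => hx.1))

end

/-- Convexity bound for the inclusive KL: for probability measures `π, μ₀` and `λ ∈ [0,1]`,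
`D_KL(π | (1-λ)μ₀ + λπ) ≤ (1-λ)·D_KL(π | μ₀)`. In particular, taking `λ = 1 - e^{-t}`,
the Fisher–Rao flow `μ_t = e^{-t}μ₀ + (1-e^{-t})π` satisfies
`D_KL(π | μ_t) ≤ e^{-t}·D_KL(π | μ₀)`. -/
theorem inclusive_KL_convexity_bound {X : Type*} [MeasurableSpace X]
    (μ₀ π : Measure X) [IsProbabilityMeasure μ₀] [IsProbabilityMeasure π] :
    (∀ l : ℝ, 0 ≤ l → l ≤ 1 →
      klDiv π (ENNReal.ofReal (1 - l) • μ₀ + ENNReal.ofReal l • π) ≤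
        ENNReal.ofReal (1 - l) * klDiv π μ₀) ∧
    (∀ t : ℝ, 0 ≤ t →
      klDiv π (ENNReal.ofReal (Real.exp (-t)) • μ₀
          + ENNReal.ofReal (1 - Real.exp (-t)) • π) ≤
        ENNReal.ofReal (Real.exp (-t)) * klDiv π μ₀) := by
  refine ⟨fun l hl0 hl1 => klDiv_smul_add_smul_le hl0 hl1, fun t ht => ?_⟩
  have hexp : Real.exp (-t) ≤ 1 := Real.exp_le_one_iff.2 (neg_nonpos.2 ht)
  simpa using
    klDiv_smul_add_smul_le (l := 1 - Real.exp (-t)) (by linarith) (by linarith [Real.exp_pos (-t)])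
end

section
/- (No global Łojasiewicz inequality for exclusive KL in the Hellinger geometry) There is no constant c > 0 such that for all probability measures μ, π (with μ ≪ π, both with positive densities) the inequality ∫ (log(dμ/dπ))² dμ ≥ c·D_KL(μ|π) holds; equivalently, inf over μ of ‖log(dμ/dπ)‖²_{L²(μ)} / D_KL(μ|π) = 0. -/
open MeasureTheory
open scoped ENNReal NNReal

open Filter in
/-- For `u > 0`, eventually `u * m^2 + 1 < (1+u)^m`. -/
private lemma aux_exists_pow (u : ℝ) (hu : 0 < u) :
    ∃ k : ℕ, u * ((k : ℝ) + 1) ^ 2 + 1 < (1 + u) ^ (k + 1) := by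
  have hr1 : (1 : ℝ) < 1 + u := by linarith
  have hA : Tendsto (fun m : ℕ => (m : ℝ) ^ 2 / (1 + u) ^ m) atTop (nhds 0) :=
    tendsto_pow_const_div_const_pow_of_one_lt 2 hr1
  have hB : Tendsto (fun m : ℕ => (1 + u) ^ m) atTop atTop :=
    tendsto_pow_atTop_atTop_of_one_lt hr1
  have hA' : ∀ᶠ m : ℕ in atTop, (m : ℝ) ^ 2 / (1 + u) ^ m < 1 / (2 * u) := by
    have := hA.eventually (eventually_lt_nhds (by positivity : (0:ℝ) < 1 / (2 * u)))
    exact this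
  have hB' : ∀ᶠ m : ℕ in atTop, (2 : ℝ) < (1 + u) ^ m := hB.eventually_gt_atTop 2
  have hall : ∀ᶠ m : ℕ in atTop, u * (m : ℝ) ^ 2 + 1 < (1 + u) ^ m := by
    filter_upwards [hA', hB'] with m h1 h2
    have hpow : (0 : ℝ) < (1 + u) ^ m := by positivity
    rw [div_lt_div_iff₀ hpow (by positivity)] at h1
    nlinarith
  obtain ⟨m, hm⟩ := ((tendsto_add_atTop_nat 1).eventually hall).exists
  refine ⟨m, ?_⟩
  have : ((m + 1 : ℕ) : ℝ) = (m : ℝ) + 1 := by push_cast; ring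
  rwa [this] at hm

/-- No global Łojasiewicz (PL) inequality for the exclusive KL in the Hellinger geometry:
there is no constant `c > 0` such that for all probability measures `μ ≪ π` with positive
density, `∫ (log(dμ/dπ))² dμ ≥ c · D_KL(μ|π)` (with `D_KL(μ|π) = ∫ log(dμ/dπ) dμ`);
equivalently, the infimum over `μ` of `‖log(dμ/dπ)‖²_{L²(μ)} / D_KL(μ|π)` is `0`. -/
theorem no_global_Lojasiewicz_exclusive_KL :
    ¬ ∃ c : ℝ, 0 < c ∧
      ∀ (X : Type) (_ : MeasurableSpace X) (μ π : Measure X),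
        IsProbabilityMeasure μ → IsProbabilityMeasure π → μ ≪ π →
        (∀ᵐ x ∂π, 0 < (μ.rnDeriv π x).toReal) →
        ∫ x, (Real.log ((μ.rnDeriv π x).toReal)) ^ 2 ∂μ ≥
          c * ∫ x, Real.log ((μ.rnDeriv π x).toReal) ∂μ := by
  rintro ⟨c, hc, H⟩
  set u : ℝ := c / 2 with hu_def
  have hu0 : 0 < u := by positivity
  obtain ⟨k, hk⟩ := aux_exists_pow u hu0
  set r1 : ℝ := 1 + u with hr1_def
  have hr1 : (1 : ℝ) < r1 := by simp [hr1_def]; linarith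
  have hr1pos : (0 : ℝ) < r1 := by linarith
  set r2 : ℝ := (r1 ^ k)⁻¹ with hr2_def
  have hr2pos : (0 : ℝ) < r2 := by positivity
  have hD : (0 : ℝ) < r1 ^ (k + 1) - 1 := by
    have h1 : (1:ℝ) < r1 ^ (k+1) := one_lt_pow₀ hr1 (by omega)
    linarith
  set δ : ℝ := u / (r1 ^ (k + 1) - 1) with hδ_def
  have hδpos : (0 : ℝ) < δ := by positivity
  have hδeq : δ * (r1 ^ (k + 1) - 1) = u := div_mul_cancel₀ _ hD.ne'
  have hδk : δ * ((k : ℝ) + 1) ^ 2 < 1 := by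
    rw [hδ_def, div_mul_eq_mul_div, div_lt_one hD]
    linarith
  have hk1 : (1 : ℝ) ≤ ((k : ℝ) + 1) ^ 2 := by nlinarith [Nat.cast_nonneg (α := ℝ) k]
  have hδ1 : δ < 1 := by nlinarith
  set a : ℝ := 1 - δ with ha_def
  have ha : (0 : ℝ) < a := by simp [ha_def]; linarith
  -- the sum identity for π being a probability measure
  have hsum : a / r1 + δ / r2 = 1 := by
    rw [hr2_def, div_inv_eq_mul]
    have hps : r1 ^ k * r1 = r1 ^ (k + 1) := (pow_succ r1 k).symm
    field_simp [ha_def]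
    nlinarith [hδeq, hps]
  -- the two-point measures
  classical
  set fval : Bool → ℝ := fun b => if b then r1 else r2 with hfval_def
  have hfvalpos : ∀ b, 0 < fval b := by
    intro b; cases b <;> simp [hfval_def, hr1pos, hr2pos]
  set fnn : Bool → ℝ≥0 := fun b => Real.toNNReal (fval b) with hfnn_def
  have hfnncoe : ∀ b, ((fnn b : ℝ)) = fval b := fun b =>
    Real.coe_toNNReal _ (hfvalpos b).le
  set p : ℝ≥0∞ := ENNReal.ofReal (a / r1) with hp_def
  set q : ℝ≥0∞ := ENNReal.ofReal (δ / r2) with hq_def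
  set π : Measure Bool := p • Measure.dirac true + q • Measure.dirac false with hπ_def
  set μ : Measure Bool := π.withDensity (fun b => (fnn b : ℝ≥0∞)) with hμ_def
  have hmeas : Measurable (fun b => ((fnn b : ℝ≥0∞))) := measurable_of_finite _
  have hπuniv : π Set.univ = 1 := by
    rw [hπ_def]
    simp only [Measure.add_apply, Measure.smul_apply, Measure.dirac_apply', MeasurableSet.univ,
      smul_eq_mul]
    simp [hp_def, hq_def, Set.indicator_univ, ← ENNReal.ofReal_add
      (by positivity : (0:ℝ) ≤ a / r1) (by positivity : (0:ℝ) ≤ δ / r2), hsum]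
  haveI hπprob : IsProbabilityMeasure π := ⟨hπuniv⟩
  have hμuniv : μ Set.univ = 1 := by
    rw [hμ_def, withDensity_apply _ MeasurableSet.univ, Measure.restrict_univ, hπ_def,
      lintegral_add_measure, lintegral_smul_measure, lintegral_smul_measure,
      lintegral_dirac, lintegral_dirac]
    have h1 : (fnn true : ℝ≥0∞) = ENNReal.ofReal r1 := by
      rw [← ENNReal.ofReal_coe_nnreal, hfnncoe]; simp [hfval_def]
    have h2 : (fnn false : ℝ≥0∞) = ENNReal.ofReal r2 := by
      rw [← ENNReal.ofReal_coe_nnreal, hfnncoe]; simp [hfval_def]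
    rw [h1, h2, hp_def, hq_def, smul_eq_mul, smul_eq_mul, ← ENNReal.ofReal_mul (by positivity),
      ← ENNReal.ofReal_mul (by positivity), div_mul_cancel₀ _ hr1pos.ne',
      div_mul_cancel₀ _ hr2pos.ne', ← ENNReal.ofReal_add ha.le hδpos.le]
    norm_num [ha_def]
  haveI hμprob : IsProbabilityMeasure μ := ⟨hμuniv⟩
  have habs : μ ≪ π := withDensity_absolutelyContinuous _ _
  have hrn : μ.rnDeriv π =ᵐ[π] fun b => ((fnn b : ℝ≥0∞)) :=
    Measure.rnDeriv_withDensity π hmeas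
  have hpos : ∀ᵐ x ∂π, 0 < (μ.rnDeriv π x).toReal := by
    filter_upwards [hrn] with x hx
    rw [hx, ENNReal.coe_toReal, hfnncoe]
    exact hfvalpos x
  have haeμ : (fun x => (μ.rnDeriv π x).toReal) =ᵐ[μ] fun x => fval x := by
    refine habs.ae_eq ?_
    filter_upwards [hrn] with x hx
    rw [hx, ENNReal.coe_toReal, hfnncoe]
  -- integral computation
  have hInt : ∀ g : Bool → ℝ, ∫ x, g x ∂μ = a * g true + δ * g false := by
    intro g
    rw [hμ_def, integral_withDensity_eq_integral_smul (measurable_of_finite _) g]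
    have hint1 : Integrable (fun x => fnn x • g x) π := Integrable.of_finite
    rw [hπ_def, integral_add_measure
        (hint1.mono_measure (by rw [hπ_def]; exact Measure.le_add_right le_rfl))
        (hint1.mono_measure (by rw [hπ_def]; exact Measure.le_add_left le_rfl)),
      integral_smul_measure, integral_smul_measure, integral_dirac, integral_dirac]
    simp only [NNReal.smul_def, hfnncoe, smul_eq_mul]
    rw [hp_def, hq_def, ENNReal.toReal_ofReal (by positivity),
      ENNReal.toReal_ofReal (by positivity)]
    have e1 : fval true = r1 := by simp [hfval_def]
    have e2 : fval false = r2 := by simp [hfval_def]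
    rw [e1, e2]
    field_simp
  have he2 : (fun x => (Real.log ((μ.rnDeriv π x).toReal)) ^ 2)
      =ᵐ[μ] (fun x => (Real.log (fval x)) ^ 2) := by
    filter_upwards [haeμ] with x hx
    rw [hx]
  have he1 : (fun x => Real.log ((μ.rnDeriv π x).toReal))
      =ᵐ[μ] (fun x => Real.log (fval x)) := by
    filter_upwards [haeμ] with x hx
    rw [hx]
  have hI2 : ∫ x, (Real.log ((μ.rnDeriv π x).toReal)) ^ 2 ∂μ
      = a * (Real.log r1) ^ 2 + δ * (Real.log r2) ^ 2 := by
    rw [integral_congr_ae he2, hInt (fun b => (Real.log (fval b)) ^ 2)]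
    simp [hfval_def]
  have hI1 : ∫ x, Real.log ((μ.rnDeriv π x).toReal) ∂μ
      = a * Real.log r1 + δ * Real.log r2 := by
    rw [integral_congr_ae he1, hInt (fun b => Real.log (fval b))]
    simp [hfval_def]
  have hmain := H Bool _ μ π hμprob hπprob habs hpos
  rw [hI1, hI2] at hmain
  -- numeric contradiction
  set t : ℝ := Real.log r1 with ht_def
  have ht0 : 0 < t := Real.log_pos hr1
  have htu : t ≤ u := by
    have := Real.log_le_sub_one_of_pos hr1pos
    rw [← ht_def] at this
    simp only [hr1_def] at this
    linarith
  have hlog2 : Real.log r2 = -((k : ℝ) * t) := by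
    rw [hr2_def, Real.log_inv, Real.log_pow, ht_def]
  rw [hlog2] at hmain
  have hck : c = 2 * u := by rw [hu_def]; ring
  have hknn : (0 : ℝ) ≤ (k : ℝ) := Nat.cast_nonneg k
  have H1 : 0 ≤ a * (t * (u - t)) :=
    mul_nonneg ha.le (mul_nonneg ht0.le (by linarith))
  have H2 : 0 ≤ δ * (k : ℝ) ^ 2 * (t * (u - t)) :=
    mul_nonneg (mul_nonneg hδpos.le (sq_nonneg _)) (mul_nonneg ht0.le (by linarith))
  have H3 : 0 < u * t * (1 - δ * ((k : ℝ) + 1) ^ 2) :=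
    mul_pos (mul_pos hu0 ht0) (by linarith)
  have hexp : c * (a * t + δ * -(↑k * t)) - (a * t ^ 2 + δ * (-(↑k * t)) ^ 2)
      = a * (t * (u - t)) + δ * (k : ℝ) ^ 2 * (t * (u - t))
        + u * t * (1 - δ * ((k : ℝ) + 1) ^ 2) := by
    rw [hck, ha_def]; ring
  linarith [hmain, H1, H2, H3, hexp]
end
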